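/- For the two-layer radial problem with f⁻(ζ) = C₁(ζa+b)^{n/2} inside and f⁺(ζ) = C₂(ζa+b)^{−n/2} outside (a = R²(0), b = R₀²(τ)), continuity f⁻(1) = f⁺(1) = f(1) together with the dynamic condition (2R²(τ)/a)(−μₒ(f⁺)'(1) + μᵢ(f⁻)'(1)) = G·D and kinematic condition D' = f(1), where R²(τ) = a + b, implies D'/D = G/(n(μᵢ + μₒ)). (This yields the growth rate formula σ = (Qn/(2πR²))·(μₒ−μᵢ)/(μₒ+μᵢ) − (T/(μᵢ+μₒ))(n³−n)/R³ when G = Qn²(μₒ−μᵢ)/(2πR²) − T(n⁴−n²)/R³.) -/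

import Mathlib

/-! Both profiles are powers of the affine function `ζ ↦ ζ a + b`, so their logarithmic derivatives
at `ζ = 1` are `± (n / 2) a / (a + b)`. By continuity they share the value `f(1)`, hence the dynamic
condition collapses to `G D = n (μᵢ + μₒ) f(1)`, and the kinematic condition `D' = f(1)` gives the
growth rate. -/

theorem hasDerivAt_of_forall_eq_mul_rpow {f : ℝ → ℝ} {a b C p ζ : ℝ}
    (hf : ∀ x, f x = C * (x * a + b) ^ p) (hζ : ζ * a + b ≠ 0) :
    HasDerivAt f (p * a * f ζ / (ζ * a + b)) ζ := by
  have hlin : HasDerivAt (fun x : ℝ => x * a + b) a ζ := by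
    simpa using ((hasDerivAt_id ζ).mul_const a).add_const b
  have hpow := (hlin.rpow_const (p := p) (Or.inl hζ)).const_mul C
  rw [Real.rpow_sub_one hζ] at hpow
  rw [hf, funext hf]
  exact hpow.congr_deriv (by ring)

theorem two_layer_growth_rate_general (a b n μi μo C₁ C₂ G D D' : ℝ)
    (ha : 0 < a) (hb : 0 < b) (hn : 0 < n) (hμi : 0 < μi) (hμo : 0 < μo)
    (fm fp : ℝ → ℝ)
    (hfm : ∀ ζ, fm ζ = C₁ * (ζ * a + b) ^ (n / 2))
    (hfp : ∀ ζ, fp ζ = C₂ * (ζ * a + b) ^ (-(n / 2)))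
    (hcont : fm 1 = fp 1) (hD : D ≠ 0)
    (hdyn : 2 * (a + b) / a * (-μo * deriv fp 1 + μi * deriv fm 1) = G * D)
    (hkin : D' = fm 1) :
    D' / D = G / (n * (μi + μo)) := by
  have hab : 1 * a + b ≠ 0 := by positivity
  rw [(hasDerivAt_of_forall_eq_mul_rpow hfm hab).deriv,
    (hasDerivAt_of_forall_eq_mul_rpow hfp hab).deriv, ← hcont, one_mul] at hdyn
  have hGD : G * D = n * (μi + μo) * fm 1 := by
    rw [← hdyn]
    field_simp
    ring
  rw [hkin, div_eq_div_iff hD (by positivity), hGD]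
  ring

theorem two_layer_growth_rate (a b n μi μo C₁ C₂ G D D' : ℝ)
    (ha : 0 < a) (hb : 0 < b) (hn : 0 < n) (hμi : 0 < μi) (hμo : 0 < μo)
    (fm fp : ℝ → ℝ)
    (hfm : ∀ ζ, fm ζ = C₁ * (ζ * a + b) ^ (n / 2))
    (hfp : ∀ ζ, fp ζ = C₂ * (ζ * a + b) ^ (-(n / 2)))
    (hcont : fm 1 = fp 1) (hne : fm 1 ≠ 0) (hD : D ≠ 0)
    (hdyn : 2 * (a + b) / a * (-μo * deriv fp 1 + μi * deriv fm 1) = G * D)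
    (hkin : D' = fm 1) :
    D' / D = G / (n * (μi + μo)) :=
  two_layer_growth_rate_general a b n μi μo C₁ C₂ G D D' ha hb hn hμi hμo fm fp hfm hfp hcont hD
    hdyn hkin
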